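/- Let X_B be an 𝒳-resolution of an object B of 𝒜, let X be a bounded cochain complex with all terms in 𝒳, and let f : X → B be a chain map to the stalk complex B. Then for all sufficiently large m, the canonical inclusion chain map B → X_B^{≥ -m} into the brutal truncation of X_B factors, in the homotopy category, through the natural map B → Cone(f) into the mapping cone of f. -/

import Mathlib

open CategoryTheory Limits ZeroObject

universe v u

variable {A : Type u} [Category.{v} A] [Preadditive A] [HasZeroObject A]
  [HasBinaryBiproducts A]

/-- An `𝒳`-resolution of `B`. -/
structure IsXResolution (𝒳 : A → Prop) (B : A) (C : CochainComplex A ℤ) where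
  degZeroIso : C.X 0 ≅ B
  isZero_of_pos : ∀ i : ℤ, 0 < i → Limits.IsZero (C.X i)
  mem_of_neg : ∀ i : ℤ, i < 0 → 𝒳 (C.X i)
  acyclic : ∀ (T : A), 𝒳 T → ∀ n : ℤ,
    (((preadditiveCoyoneda.obj (Opposite.op T)).mapHomologicalComplex
      (ComplexShape.up ℤ)).obj C).ExactAt n

/-- The brutal (stupid) truncation `K^{≥ a}` of a cochain complex `K`:
it agrees with `K` in degrees `≥ a` and is zero elsewhere. -/
noncomputable def btrunc (K : CochainComplex A ℤ) (a : ℤ) : CochainComplex A ℤ where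
  X i := if a ≤ i then K.X i else 0
  d i j :=
    if hi : a ≤ i then
      if hj : a ≤ j then
        eqToHom (if_pos hi) ≫ K.d i j ≫ eqToHom (if_pos hj).symm
      else 0
    else 0
  shape i j h := by
    try dsimp only
    by_cases hi : a ≤ i <;> by_cases hj : a ≤ j <;> simp [hi, hj, K.shape i j h]
  d_comp_d' i j k _ _ := by
    try dsimp only
    by_cases hi : a ≤ i <;> by_cases hj : a ≤ j <;> by_cases hk : a ≤ k <;>
      simp [hi, hj, hk]

/-- The canonical inclusion `B → X_B^{≥ -m}` from the stalk complex `B` (in degree `0`)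
into the brutal truncation of an `𝒳`-resolution `X_B` of `B`, for `-m ≤ 0`:
its degree-zero component is the canonical isomorphism `B ≅ X_B^0`. -/
noncomputable def inclToBtrunc {𝒳 : A → Prop} {B : A} {XB : CochainComplex A ℤ}
    (hXB : IsXResolution 𝒳 B XB) (m : ℤ) (hm : 0 ≤ m) :
    (HomologicalComplex.single A (ComplexShape.up ℤ) 0).obj B ⟶ btrunc XB (-m) :=
  HomologicalComplex.mkHomFromSingle
    (hXB.degZeroIso.inv ≫ eqToHom (if_pos (by omega : -m ≤ (0 : ℤ))).symm)
    (fun k hk => by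
      apply Limits.IsZero.eq_of_tgt
      have hk' : k = 1 := by simpa using hk.symm
      by_cases h : -m ≤ k
      · refine Limits.IsZero.of_iso ?_ (eqToIso (if_pos h))
        refine hXB.isZero_of_pos k ?_
        omega
      · exact Limits.IsZero.of_iso (isZero_zero A) (eqToIso (if_neg h)))

/-!
Write `T = X_B^{≥ -m}`. The composite `Y → B → T` is null-homotopic: since `T` vanishes in
positive degrees, a null-homotopy can be built by downward induction on the degree `p`, and each
step asks that a cocycle `Y^p → T^p` be a coboundary. For `p > -m` this is the
`Hom(𝒳, -)`-acyclicity of `X_B`, and for `p ≤ -m` there is nothing to do once `-m` lies below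
the range of `Y`. A null-homotopy of `Y → B → T` is exactly what is needed to extend
`B → T` over the mapping cone of `f`.
-/

open CochainComplex HomComplex

namespace CochainComplex

section

variable {C : Type*} [Category C] [Preadditive C]

/-- Exactness of `Hom(T, K)` in degree `n`, in elementary form. -/
def LiftsCocyclesAt (T : C) (K : CochainComplex C ℤ) (n : ℤ) : Prop :=
  ∀ u : T ⟶ K.X n, u ≫ K.d n (n + 1) = 0 → ∃ v : T ⟶ K.X (n - 1), v ≫ K.d (n - 1) n = u

lemma liftsCocyclesAt_of_exactAt {T : C} {K : CochainComplex C ℤ} {n : ℤ}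
    (h : (((preadditiveCoyoneda.obj (Opposite.op T)).mapHomologicalComplex
      (ComplexShape.up ℤ)).obj K).ExactAt n) :
    LiftsCocyclesAt T K n := by
  rw [HomologicalComplex.exactAt_iff' _ (n - 1) n (n + 1) (by simp) (by simp),
    ShortComplex.ab_exact_iff] at h
  exact h

lemma LiftsCocyclesAt.of_isZero_source {T : C} (hT : IsZero T) (K : CochainComplex C ℤ)
    (n : ℤ) : LiftsCocyclesAt T K n :=
  fun _ _ => ⟨0, hT.eq_of_src _ _⟩

lemma LiftsCocyclesAt.of_isZero_X (T : C) {K : CochainComplex C ℤ} {n : ℤ}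
    (hK : IsZero (K.X n)) : LiftsCocyclesAt T K n :=
  fun _ _ => ⟨0, hK.eq_of_tgt _ _⟩

variable {K L : CochainComplex C ℤ}

lemma exists_δ_v_eq_of_liftsCocyclesAt (φ : K ⟶ L) {b : ℤ}
    (hL : ∀ q, b < q → IsZero (L.X q)) (hlift : ∀ p, LiftsCocyclesAt (K.X p) L p) (k : ℕ) :
    ∃ α : Cochain K L (-1), ∀ p, b - k < p → (δ (-1) 0 α).v p p (add_zero p) = φ.f p := by
  induction k with
  | zero =>
    exact ⟨0, fun p hp => (hL p (by omega)).eq_of_tgt _ _⟩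
  | succ k ih =>
    obtain ⟨α, hα⟩ := ih
    set p := b - k
    set z := Cochain.ofHom φ - δ (-1) 0 α
    have hz_above : ∀ p', p < p' → z.v p' p' (add_zero p') = 0 := fun p' hp' => by
      simp [z, hα p' hp']
    have hz_cocycle : z.v p p (add_zero p) ≫ L.d p (p + 1) = 0 := by
      have := congr_arg (fun w : Cochain K L 1 => w.v p (p + 1) rfl)
        (show δ 0 1 z = 0 by simp [z, δ_δ])
      simpa [hz_above (p + 1) (by omega), sub_eq_zero] using this
    obtain ⟨v, hv⟩ := hlift p _ hz_cocycle
    refine ⟨α + Cochain.single v (-1), fun p' hp' => ?_⟩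
    rw [δ_add, Cochain.δ_single v (-1) 0 (by omega) (p - 1) p (by omega) (by omega),
      Cochain.add_v, Cochain.add_v, Cochain.units_smul_v,
      Cochain.single_v_eq_zero _ _ _ _ _ (show p' ≠ p - 1 by omega), smul_zero, add_zero]
    rcases eq_or_lt_of_le (show p ≤ p' by omega) with rfl | hlt
    · simp [hv, z]
    · rw [Cochain.single_v_eq_zero _ _ _ _ _ (show p' ≠ p by omega), add_zero, hα p' hlt]

theorem exists_δ_eq_ofHom_of_liftsCocyclesAt (φ : K ⟶ L) {a b : ℤ}
    (hK : ∀ p, p < a → IsZero (K.X p)) (hL : ∀ q, b < q → IsZero (L.X q))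
    (hlift : ∀ p, LiftsCocyclesAt (K.X p) L p) :
    ∃ α : Cochain K L (-1), δ (-1) 0 α = Cochain.ofHom φ := by
  obtain ⟨α, hα⟩ := exists_δ_v_eq_of_liftsCocyclesAt φ hL hlift (b - a + 1).toNat
  refine ⟨α, Cochain.ext₀ _ _ fun p => ?_⟩
  rw [Cochain.ofHom_v]
  by_cases hp : b - (b - a + 1).toNat < p
  · exact hα p hp
  · exact (hK p (by omega)).eq_of_src _ _

end

end CochainComplex

section

variable {C : Type*} [Category C] [Preadditive C] [HasZeroObject C]

noncomputable def btruncXIso (K : CochainComplex C ℤ) {a i : ℤ} (h : a ≤ i) :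
    (btrunc K a).X i ≅ K.X i :=
  eqToIso (if_pos h)

lemma btrunc_d_of_le (K : CochainComplex C ℤ) {a i j : ℤ} (hi : a ≤ i) (hj : a ≤ j) :
    (btrunc K a).d i j = (btruncXIso K hi).hom ≫ K.d i j ≫ (btruncXIso K hj).inv := by
  simp [btrunc, btruncXIso, hi, hj]

lemma isZero_btrunc_X {K : CochainComplex C ℤ} (a : ℤ) {i : ℤ} (h : IsZero (K.X i)) :
    IsZero ((btrunc K a).X i) := by
  by_cases hi : a ≤ i
  · exact h.of_iso (btruncXIso K hi)
  · exact (isZero_zero C).of_iso (eqToIso (if_neg hi))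

lemma liftsCocyclesAt_btrunc {T : C} {K : CochainComplex C ℤ} {a n : ℤ} (han : a < n)
    (hK : LiftsCocyclesAt T K n) : LiftsCocyclesAt T (btrunc K a) n := by
  intro u hu
  have hn₀ : a ≤ n - 1 := by omega
  have hn₁ : a ≤ n := by omega
  have hn₂ : a ≤ n + 1 := by omega
  rw [btrunc_d_of_le K hn₁ hn₂] at hu
  obtain ⟨v, hv⟩ := hK (u ≫ (btruncXIso K hn₁).hom)
    ((cancel_mono (btruncXIso K hn₂).inv).1 (by simpa using hu))
  refine ⟨v ≫ (btruncXIso K hn₀).inv, ?_⟩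
  simp [btrunc_d_of_le K hn₀ hn₁, reassoc_of% hv]

end

/-- Lemma 3.2(2): given an `𝒳`-resolution `X_B` of `B`, a bounded complex `Y` with terms
in `𝒳` and a chain map `f : Y ⟶ B` to the stalk complex `B`, for all sufficiently large
`m` the canonical inclusion `B → X_B^{≥ -m}` factors, in the homotopy category, through
the natural map `B → Cone(f)`. -/
theorem incl_factors_through_cone {𝒳 : A → Prop} {B : A} {XB : CochainComplex A ℤ}
    (hXB : IsXResolution 𝒳 B XB)
    (Y : CochainComplex A ℤ)
    (hYmem : ∀ i : ℤ, 𝒳 (Y.X i))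
    (hYbdd : ∃ a b : ℤ, ∀ i : ℤ, (i < a ∨ b < i) → Limits.IsZero (Y.X i))
    (f : Y ⟶ (HomologicalComplex.single A (ComplexShape.up ℤ) 0).obj B) :
    ∃ m₀ : ℤ, 0 ≤ m₀ ∧ ∀ (m : ℤ), m₀ ≤ m → ∀ (hm : 0 ≤ m),
      ∃ g : (HomotopyCategory.quotient A (ComplexShape.up ℤ)).obj
            (CochainComplex.mappingCone f) ⟶
          (HomotopyCategory.quotient A (ComplexShape.up ℤ)).obj (btrunc XB (-m)),
        (HomotopyCategory.quotient A (ComplexShape.up ℤ)).map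
            (inclToBtrunc hXB m hm) =
          (HomotopyCategory.quotient A (ComplexShape.up ℤ)).map
            (CochainComplex.mappingCone.inr f) ≫ g := by
  obtain ⟨a, _, hYzero⟩ := hYbdd
  refine ⟨max 0 (1 - a), le_max_left _ _, fun m hm₀ hm => ?_⟩
  have hlift : ∀ p, LiftsCocyclesAt (Y.X p) (btrunc XB (-m)) p := fun p => by
    by_cases hpa : p < a
    · exact .of_isZero_source (hYzero p (.inl hpa)) _ _
    by_cases hp0 : 0 < p
    · exact .of_isZero_X _ (isZero_btrunc_X _ (hXB.isZero_of_pos p hp0))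
    exact liftsCocyclesAt_btrunc (by omega)
      (liftsCocyclesAt_of_exactAt (hXB.acyclic _ (hYmem p) p))
  obtain ⟨α, hα⟩ := exists_δ_eq_ofHom_of_liftsCocyclesAt (f ≫ inclToBtrunc hXB m hm)
    (fun p hp => hYzero p (.inl hp))
    (fun q hq => isZero_btrunc_X _ (hXB.isZero_of_pos q hq)) hlift
  exact ⟨(HomotopyCategory.quotient _ _).map (mappingCone.desc f α _ hα),
    by rw [← Functor.map_comp, mappingCone.inr_desc]⟩
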